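/- Boundedness of PFIBM: Let T be a strict t-norm, p,q > 0, and α₁,...,αₙ PFNs. Set α⁻ = ⟨minᵢ μ_{αᵢ}, minᵢ η_{αᵢ}, maxᵢ ν_{αᵢ}⟩ and α⁺ = ⟨maxᵢ μ_{αᵢ}, 1 − (maxᵢ μ_{αᵢ} + minᵢ ν_{αᵢ}), minᵢ ν_{αᵢ}⟩. Then α⁻ ≼_W PFIBM_T^{p,q}(α₁,...,αₙ) ≼_W α⁺ in the lexicographic order ≼_W. -/

import Mathlib

open Set ENNReal

/-- A picture fuzzy number: a triple (μ, η, ν) ∈ [0,1]³ with μ + η + ν ≤ 1. -/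
def IsPFN (a : ℝ × ℝ × ℝ) : Prop :=
  a.1 ∈ Icc (0:ℝ) 1 ∧ a.2.1 ∈ Icc (0:ℝ) 1 ∧ a.2.2 ∈ Icc (0:ℝ) 1 ∧
    a.1 + a.2.1 + a.2.2 ≤ 1

/-- `τ : [0,1] → [0,∞]` is an additive generator of a strict t-norm:
a continuous strictly decreasing bijection with `τ 1 = 0`, `τ 0 = ∞`;
`σ` is its inverse (taking values in `[0,1]`). -/
structure IsStrictGenerator (τ : ℝ → ℝ≥0∞) (σ : ℝ≥0∞ → ℝ) : Prop where
  anti : StrictAntiOn τ (Icc (0:ℝ) 1)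
  cont : ContinuousOn τ (Icc (0:ℝ) 1)
  map_one : τ 1 = 0
  map_zero : τ 0 = ⊤
  left_inv : ∀ x ∈ Icc (0:ℝ) 1, σ (τ x) = x
  right_inv : ∀ y, τ (σ y) = y
  mem : ∀ y, σ y ∈ Icc (0:ℝ) 1

/-- `ζ x = τ (1 - x)`, an additive generator of the dual t-conorm. -/
noncomputable def zeta (τ : ℝ → ℝ≥0∞) (x : ℝ) : ℝ≥0∞ := τ (1 - x)

/-- `ζ⁻¹ y = 1 - σ y`, the inverse of `ζ`. -/
noncomputable def zetaInv (σ : ℝ≥0∞ → ℝ) (y : ℝ≥0∞) : ℝ := 1 - σ y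

/-- The PFN addition `α ⊕ β` induced by the strict t-norm with generator `τ`. -/
noncomputable def oplusG (τ : ℝ → ℝ≥0∞) (σ : ℝ≥0∞ → ℝ) (a b : ℝ × ℝ × ℝ) :
    ℝ × ℝ × ℝ :=
  (zetaInv σ (zeta τ a.1 + zeta τ b.1),
   σ (τ (a.2.1 + a.2.2) + τ (b.2.1 + b.2.2)) - σ (τ a.2.2 + τ b.2.2),
   σ (τ a.2.2 + τ b.2.2))

/-- The PFN product `α ⊗ β` induced by the strict t-norm with generator `τ`. -/
noncomputable def otimesG (τ : ℝ → ℝ≥0∞) (σ : ℝ≥0∞ → ℝ) (a b : ℝ × ℝ × ℝ) :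
    ℝ × ℝ × ℝ :=
  (σ (τ a.1 + τ b.1),
   σ (τ (a.2.1 + a.1) + τ (b.2.1 + b.1)) - σ (τ a.1 + τ b.1),
   zetaInv σ (zeta τ a.2.2 + zeta τ b.2.2))

/-- Scalar multiplication `λ · α` of a PFN triple. -/
noncomputable def smulG (τ : ℝ → ℝ≥0∞) (σ : ℝ≥0∞ → ℝ) (l : ℝ) (a : ℝ × ℝ × ℝ) :
    ℝ × ℝ × ℝ :=
  (zetaInv σ (ENNReal.ofReal l * zeta τ a.1),
   σ (ENNReal.ofReal l * τ (a.2.1 + a.2.2)) - σ (ENNReal.ofReal l * τ a.2.2),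
   σ (ENNReal.ofReal l * τ a.2.2))

/-- Power `α ^ λ` of a PFN triple. -/
noncomputable def ppowG (τ : ℝ → ℝ≥0∞) (σ : ℝ≥0∞ → ℝ) (l : ℝ) (a : ℝ × ℝ × ℝ) :
    ℝ × ℝ × ℝ :=
  (σ (ENNReal.ofReal l * τ a.1),
   σ (ENNReal.ofReal l * τ (a.2.1 + a.1)) - σ (ENNReal.ofReal l * τ a.1),
   zetaInv σ (ENNReal.ofReal l * zeta τ a.2.2))

/-- Score function `S(α) = μ - ν`. -/
def scoreW (a : ℝ × ℝ × ℝ) : ℝ := a.1 - a.2.2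

/-- First accuracy function `H₁(α) = μ + ν`. -/
def acc1W (a : ℝ × ℝ × ℝ) : ℝ := a.1 + a.2.2

/-- Second accuracy function `H₂(α) = μ + η + ν`. -/
def acc2W (a : ℝ × ℝ × ℝ) : ℝ := a.1 + a.2.1 + a.2.2

/-- The strict lexicographic order `≺_W` of Wu et al. -/
def ltW (a b : ℝ × ℝ × ℝ) : Prop :=
  scoreW a < scoreW b ∨
    (scoreW a = scoreW b ∧
      (acc1W a < acc1W b ∨ (acc1W a = acc1W b ∧ acc2W a < acc2W b)))

/-- The order `≼_W`: `α ≺_W β` or `α = β`. -/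
def leW (a b : ℝ × ℝ × ℝ) : Prop := ltW a b ∨ a = b

/-- The picture fuzzy interactional Bonferroni mean
`PFIBM_T^{p,q}(α₁,…,αₙ) = [ (1/(n(n-1))) ⊕_{i≠j} (αᵢ^p ⊗ αⱼ^q) ]^{1/(p+q)}`,
where the `⊕` over all ordered pairs `i ≠ j` is the iterated PFN addition. -/
noncomputable def PFIBM (τ : ℝ → ℝ≥0∞) (σ : ℝ≥0∞ → ℝ) (p q : ℝ) (n : ℕ)
    (α : Fin n → ℝ × ℝ × ℝ) : ℝ × ℝ × ℝ :=
  let terms : List (ℝ × ℝ × ℝ) :=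
    (List.finRange n).flatMap fun i =>
      ((List.finRange n).filter fun j => decide (j ≠ i)).map fun j =>
        otimesG τ σ (ppowG τ σ p (α i)) (ppowG τ σ q (α j))
  ppowG τ σ (1 / (p + q))
    (smulG τ σ (1 / ((n : ℝ) * ((n : ℝ) - 1)))
      (match terms with
       | [] => ((0 : ℝ), (0 : ℝ), (1 : ℝ))
       | h :: t => t.foldl (oplusG τ σ) h))

namespace PFIBMAux

variable {τ : ℝ → ℝ≥0∞} {σ : ℝ≥0∞ → ℝ}

lemma one_sub_mem (hg : IsStrictGenerator τ σ) (y : ℝ≥0∞) :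
    1 - σ y ∈ Icc (0:ℝ) 1 := by
  have h := hg.mem y
  exact ⟨by linarith [h.2], by linarith [h.1]⟩

lemma sigma_anti (hg : IsStrictGenerator τ σ) {y y' : ℝ≥0∞} (h : y ≤ y') :
    σ y' ≤ σ y := by
  by_contra hc
  push_neg at hc
  have h2 := hg.anti (hg.mem y) (hg.mem y') hc
  rw [hg.right_inv, hg.right_inv] at h2
  exact absurd h (not_le.mpr h2)

lemma sigma_inj (hg : IsStrictGenerator τ σ) {y y' : ℝ≥0∞} (h : σ y = σ y') :
    y = y' := by
  have := congrArg τ h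
  rwa [hg.right_inv, hg.right_inv] at this

lemma tau_le_tau (hg : IsStrictGenerator τ σ) {x y : ℝ}
    (hx : x ∈ Icc (0:ℝ) 1) (hy : y ∈ Icc (0:ℝ) 1) (h : x ≤ y) : τ y ≤ τ x :=
  hg.anti.antitoneOn hx hy h

lemma tau_inj (hg : IsStrictGenerator τ σ) {x y : ℝ}
    (hx : x ∈ Icc (0:ℝ) 1) (hy : y ∈ Icc (0:ℝ) 1) (h : τ x = τ y) : x = y := by
  have := congrArg σ h
  rwa [hg.left_inv x hx, hg.left_inv y hy] at this

lemma zeta_le (hg : IsStrictGenerator τ σ) (P Q : ℝ≥0∞) {a b X : ℝ}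
    (ha : a ∈ Icc (0:ℝ) 1) (hb : b ∈ Icc (0:ℝ) 1) (hX : X ∈ Icc (0:ℝ) 1)
    (h1 : X ≤ a) (h2 : X ≤ b) :
    τ (1 - σ ((P + Q) * τ X)) ≤ τ (1 - σ (P * τ a + Q * τ b)) := by
  have h3 : P * τ a + Q * τ b ≤ (P + Q) * τ X := by
    rw [add_mul]
    exact add_le_add (mul_le_mul_right (tau_le_tau hg hX ha h1) P)
      (mul_le_mul_right (tau_le_tau hg hX hb h2) Q)
  have h4 := sigma_anti hg h3
  exact tau_le_tau hg (one_sub_mem hg _) (one_sub_mem hg _) (by linarith)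

lemma zeta_ge (hg : IsStrictGenerator τ σ) (P Q : ℝ≥0∞) {a b X : ℝ}
    (ha : a ∈ Icc (0:ℝ) 1) (hb : b ∈ Icc (0:ℝ) 1) (hX : X ∈ Icc (0:ℝ) 1)
    (h1 : a ≤ X) (h2 : b ≤ X) :
    τ (1 - σ (P * τ a + Q * τ b)) ≤ τ (1 - σ ((P + Q) * τ X)) := by
  have h3 : (P + Q) * τ X ≤ P * τ a + Q * τ b := by
    rw [add_mul]
    exact add_le_add (mul_le_mul_right (tau_le_tau hg ha hX h1) P)
      (mul_le_mul_right (tau_le_tau hg hb hX h2) Q)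
  have h4 := sigma_anti hg h3
  exact tau_le_tau hg (one_sub_mem hg _) (one_sub_mem hg _) (by linarith)

lemma F_mono (hg : IsStrictGenerator τ σ) (r lam : ℝ≥0∞) {S S' : ℝ≥0∞}
    (h : S ≤ S') :
    σ (r * τ (1 - σ (lam * S))) ≤ σ (r * τ (1 - σ (lam * S'))) := by
  have h1 := sigma_anti hg (mul_le_mul_right h lam)
  exact sigma_anti hg (mul_le_mul_right
    (tau_le_tau hg (one_sub_mem hg _) (one_sub_mem hg _) (by linarith)) r)

lemma F_val (hg : IsStrictGenerator τ σ) {r c lam N : ℝ≥0∞}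
    (hrc : r * c = 1) (hlN : lam * N = 1) {X : ℝ} (hX : X ∈ Icc (0:ℝ) 1) :
    σ (r * τ (1 - σ (lam * (N * τ (1 - σ (c * τ X)))))) = X := by
  rw [← mul_assoc, hlN, one_mul, hg.left_inv _ (one_sub_mem hg _),
    show (1:ℝ) - (1 - σ (c * τ X)) = σ (c * τ X) by ring,
    hg.right_inv, ← mul_assoc, hrc, one_mul, hg.left_inv X hX]

lemma all_eq_of_sum_le {l : List ℝ≥0∞} {c : ℝ≥0∞}
    (hl : ∀ x ∈ l, c ≤ x) (hs : l.sum ≤ l.length • c) : ∀ x ∈ l, x = c := by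
  induction l with
  | nil => simp
  | cons a t ih =>
    rcases eq_or_ne c ∞ with hc | hc
    · intro x hx
      exact le_antisymm (hc ▸ le_top) (hl x hx)
    have hfin : (t.length • c) ≠ ∞ := by
      simp only [nsmul_eq_mul]
      exact ENNReal.mul_ne_top (by simp) hc
    have hts : t.length • c ≤ t.sum :=
      List.card_nsmul_le_sum t c (fun x hx => hl x (List.mem_cons_of_mem _ hx))
    have hs' : a + t.sum ≤ c + t.length • c := by
      have h := hs
      rw [List.sum_cons, List.length_cons, succ_nsmul,
        add_comm (t.length • c) c] at h
      exact h
    have ha : a ≤ c := by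
      have h1 : a + t.length • c ≤ c + t.length • c :=
        le_trans (add_le_add (le_refl a) hts) hs'
      exact (ENNReal.add_le_add_iff_right hfin).mp h1
    have ha' : a = c := le_antisymm ha (hl a (List.mem_cons_self))
    have hts' : t.sum ≤ t.length • c := by
      have h1 : c + t.sum ≤ c + t.length • c := by rw [ha'] at hs'; exact hs'
      exact (ENNReal.add_le_add_iff_left hc).mp h1
    intro x hx
    rcases List.mem_cons.mp hx with rfl | hx
    · exact ha'
    · exact ih (fun y hy => hl y (List.mem_cons_of_mem _ hy)) hts' x hx

lemma term_eq (hg : IsStrictGenerator τ σ) (p q : ℝ) (a b : ℝ × ℝ × ℝ) :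
    otimesG τ σ (ppowG τ σ p a) (ppowG τ σ q b) =
      (σ (ENNReal.ofReal p * τ a.1 + ENNReal.ofReal q * τ b.1),
       σ (ENNReal.ofReal p * τ (a.2.1 + a.1) + ENNReal.ofReal q * τ (b.2.1 + b.1)) -
         σ (ENNReal.ofReal p * τ a.1 + ENNReal.ofReal q * τ b.1),
       1 - σ (ENNReal.ofReal p * τ (1 - a.2.2) + ENNReal.ofReal q * τ (1 - b.2.2))) := by
  simp only [otimesG, ppowG, zeta, zetaInv]
  refine Prod.ext ?_ (Prod.ext ?_ ?_) <;> simp only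
  · rw [hg.right_inv, hg.right_inv]
  · rw [show σ (ENNReal.ofReal p * τ (a.2.1 + a.1)) - σ (ENNReal.ofReal p * τ a.1) +
        σ (ENNReal.ofReal p * τ a.1) = σ (ENNReal.ofReal p * τ (a.2.1 + a.1)) by ring,
      show σ (ENNReal.ofReal q * τ (b.2.1 + b.1)) - σ (ENNReal.ofReal q * τ b.1) +
        σ (ENNReal.ofReal q * τ b.1) = σ (ENNReal.ofReal q * τ (b.2.1 + b.1)) by ring,
      hg.right_inv, hg.right_inv, hg.right_inv, hg.right_inv]
  · rw [show (1:ℝ) - (1 - σ (ENNReal.ofReal p * τ (1 - a.2.2))) =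
        σ (ENNReal.ofReal p * τ (1 - a.2.2)) by ring,
      show (1:ℝ) - (1 - σ (ENNReal.ofReal q * τ (1 - b.2.2))) =
        σ (ENNReal.ofReal q * τ (1 - b.2.2)) by ring,
      hg.right_inv, hg.right_inv]

lemma foldl_oplus_eq (hg : IsStrictGenerator τ σ) :
    ∀ (t : List (ℝ × ℝ × ℝ)) (h : ℝ × ℝ × ℝ), h.1 ∈ Icc (0:ℝ) 1 →
      h.2.2 ∈ Icc (0:ℝ) 1 → h.2.1 + h.2.2 ∈ Icc (0:ℝ) 1 →
    t.foldl (oplusG τ σ) h =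
      (1 - σ (τ (1 - h.1) + (t.map fun x => τ (1 - x.1)).sum),
       σ (τ (h.2.1 + h.2.2) + (t.map fun x => τ (x.2.1 + x.2.2)).sum) -
         σ (τ h.2.2 + (t.map fun x => τ x.2.2).sum),
       σ (τ h.2.2 + (t.map fun x => τ x.2.2).sum)) := by
  intro t
  induction t with
  | nil =>
    intro h h1 h2 h3
    simp only [List.foldl_nil, List.map_nil, List.sum_nil, add_zero]
    rw [hg.left_inv (1 - h.1) ⟨by linarith [h1.2], by linarith [h1.1]⟩,
      hg.left_inv _ h3, hg.left_inv _ h2]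
    refine Prod.ext ?_ (Prod.ext ?_ ?_) <;> simp only <;> ring
  | cons x t ih =>
    intro h h1 h2 h3
    rw [List.foldl_cons]
    have hx1 : (oplusG τ σ h x).1 ∈ Icc (0:ℝ) 1 := one_sub_mem hg _
    have hx2 : (oplusG τ σ h x).2.2 ∈ Icc (0:ℝ) 1 := hg.mem _
    have hx3 : (oplusG τ σ h x).2.1 + (oplusG τ σ h x).2.2 ∈ Icc (0:ℝ) 1 := by
      simp only [oplusG]
      rw [show σ (τ (h.2.1 + h.2.2) + τ (x.2.1 + x.2.2)) - σ (τ h.2.2 + τ x.2.2) +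
        σ (τ h.2.2 + τ x.2.2) = σ (τ (h.2.1 + h.2.2) + τ (x.2.1 + x.2.2)) by ring]
      exact hg.mem _
    rw [ih (oplusG τ σ h x) hx1 hx2 hx3]
    simp only [oplusG, zetaInv, zeta, List.map_cons, List.sum_cons]
    refine Prod.ext ?_ (Prod.ext ?_ ?_) <;> simp only
    · rw [show (1:ℝ) - (1 - σ (τ (1 - h.1) + τ (1 - x.1))) =
        σ (τ (1 - h.1) + τ (1 - x.1)) by ring, hg.right_inv, add_assoc]
    · rw [show σ (τ (h.2.1 + h.2.2) + τ (x.2.1 + x.2.2)) - σ (τ h.2.2 + τ x.2.2) +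
        σ (τ h.2.2 + τ x.2.2) = σ (τ (h.2.1 + h.2.2) + τ (x.2.1 + x.2.2)) by ring,
        hg.right_inv, hg.right_inv, add_assoc, add_assoc]
    · rw [hg.right_inv, add_assoc]

noncomputable def terms' (τ : ℝ → ℝ≥0∞) (σ : ℝ≥0∞ → ℝ) (p q : ℝ) (n : ℕ)
    (α : Fin n → ℝ × ℝ × ℝ) : List (ℝ × ℝ × ℝ) :=
  (List.finRange n).flatMap fun i =>
    ((List.finRange n).filter fun j => decide (j ≠ i)).map fun j =>
      otimesG τ σ (ppowG τ σ p (α i)) (ppowG τ σ q (α j))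

lemma PFIBM_eq_match (τ : ℝ → ℝ≥0∞) (σ : ℝ≥0∞ → ℝ) (p q : ℝ) (n : ℕ)
    (α : Fin n → ℝ × ℝ × ℝ) :
    PFIBM τ σ p q n α =
      ppowG τ σ (1 / (p + q))
        (smulG τ σ (1 / ((n : ℝ) * ((n : ℝ) - 1)))
          (match terms' τ σ p q n α with
           | [] => ((0 : ℝ), (0 : ℝ), (1 : ℝ))
           | h :: t => t.foldl (oplusG τ σ) h)) := rfl

lemma terms'_length (τ : ℝ → ℝ≥0∞) (σ : ℝ≥0∞ → ℝ) (p q : ℝ) (n : ℕ)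
    (α : Fin n → ℝ × ℝ × ℝ) :
    (terms' τ σ p q n α).length = n * (n - 1) := by
  simp only [terms', List.length_flatMap, Function.comp, List.length_map]
  have hlen : ∀ i : Fin n,
      ((List.finRange n).filter fun j => decide (j ≠ i)).length = n - 1 := by
    intro i
    rw [show ((List.finRange n).filter fun j => decide (j ≠ i)) =
        (List.finRange n).erase i by
      rw [(List.nodup_finRange n).erase_eq_filter]
      apply List.filter_congr
      intro j _
      cases Decidable.em (j = i) with
      | inl h => simp [h]
      | inr h => simp [h]]
    rw [List.length_erase_of_mem (List.mem_finRange i), List.length_finRange]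
  rw [List.map_congr_left fun i (_ : i ∈ List.finRange n) => by
    exact hlen i]
  simp [List.map_const', List.sum_replicate, List.length_finRange, mul_comm]

lemma PFIBM_cons (τ : ℝ → ℝ≥0∞) (σ : ℝ≥0∞ → ℝ) (p q : ℝ) (n : ℕ)
    (α : Fin n → ℝ × ℝ × ℝ) {h : ℝ × ℝ × ℝ} {t : List (ℝ × ℝ × ℝ)}
    (hE : terms' τ σ p q n α = h :: t) :
    PFIBM τ σ p q n α =
      ppowG τ σ (1 / (p + q))
        (smulG τ σ (1 / ((n : ℝ) * ((n : ℝ) - 1)))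
          (t.foldl (oplusG τ σ) h)) := by
  rw [PFIBM_eq_match τ σ p q n α, hE]

lemma mem_terms' {τ : ℝ → ℝ≥0∞} {σ : ℝ≥0∞ → ℝ} {p q : ℝ} {n : ℕ}
    {α : Fin n → ℝ × ℝ × ℝ} {x : ℝ × ℝ × ℝ} (hx : x ∈ terms' τ σ p q n α) :
    ∃ i j : Fin n, j ≠ i ∧
      x = otimesG τ σ (ppowG τ σ p (α i)) (ppowG τ σ q (α j)) := by
  simp only [terms', List.mem_flatMap, List.mem_map, List.mem_filter,
    List.mem_finRange, decide_eq_true_eq, true_and] at hx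
  obtain ⟨i, j, hj, hxe⟩ := hx
  exact ⟨i, j, hj, hxe.symm⟩

end PFIBMAux

set_option maxHeartbeats 2000000 in
open PFIBMAux in
/-- boundedness of the PFIBM operator with respect to `≼_W`. -/
theorem PFIBM_bounded (τ : ℝ → ℝ≥0∞) (σ : ℝ≥0∞ → ℝ)
    (hg : IsStrictGenerator τ σ) (p q : ℝ) (hp : 0 < p) (hq : 0 < q)
    (n : ℕ) (hn : 2 ≤ n) (α : Fin n → ℝ × ℝ × ℝ)
    (hα : ∀ i, IsPFN (α i)) :
    have hne : (Finset.univ : Finset (Fin n)).Nonempty :=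
      Finset.univ_nonempty_iff.mpr ⟨⟨0, by omega⟩⟩
    leW (Finset.univ.inf' hne (fun i => (α i).1),
         Finset.univ.inf' hne (fun i => (α i).2.1),
         Finset.univ.sup' hne (fun i => (α i).2.2))
        (PFIBM τ σ p q n α) ∧
    leW (PFIBM τ σ p q n α)
        (Finset.univ.sup' hne (fun i => (α i).1),
         1 - (Finset.univ.sup' hne (fun i => (α i).1) +
              Finset.univ.inf' hne (fun i => (α i).2.2)),
         Finset.univ.inf' hne (fun i => (α i).2.2)) := by
  have hne : (Finset.univ : Finset (Fin n)).Nonempty :=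
    Finset.univ_nonempty_iff.mpr ⟨⟨0, by omega⟩⟩
  show leW (Finset.univ.inf' hne (fun i => (α i).1),
         Finset.univ.inf' hne (fun i => (α i).2.1),
         Finset.univ.sup' hne (fun i => (α i).2.2))
        (PFIBM τ σ p q n α) ∧
    leW (PFIBM τ σ p q n α)
        (Finset.univ.sup' hne (fun i => (α i).1),
         1 - (Finset.univ.sup' hne (fun i => (α i).1) +
              Finset.univ.inf' hne (fun i => (α i).2.2)),
         Finset.univ.inf' hne (fun i => (α i).2.2))
  set m := Finset.univ.inf' hne (fun i => (α i).1) with hm_def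
  set M := Finset.univ.sup' hne (fun i => (α i).1) with hM_def
  set e := Finset.univ.inf' hne (fun i => (α i).2.1) with he_def
  set v := Finset.univ.inf' hne (fun i => (α i).2.2) with hv_def
  set V := Finset.univ.sup' hne (fun i => (α i).2.2) with hV_def
  have hμ : ∀ i, (α i).1 ∈ Icc (0:ℝ) 1 := fun i => (hα i).1
  have hη : ∀ i, (α i).2.1 ∈ Icc (0:ℝ) 1 := fun i => (hα i).2.1
  have hν : ∀ i, (α i).2.2 ∈ Icc (0:ℝ) 1 := fun i => (hα i).2.2.1
  have hw : ∀ i, (α i).2.1 + (α i).1 ∈ Icc (0:ℝ) 1 := fun i =>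
    ⟨add_nonneg (hη i).1 (hμ i).1, by linarith [(hα i).2.2.2, (hν i).1]⟩
  have hwv : ∀ i, (α i).2.1 + (α i).1 ≤ 1 - (α i).2.2 := fun i => by
    linarith [(hα i).2.2.2]
  have h1ν : ∀ i, 1 - (α i).2.2 ∈ Icc (0:ℝ) 1 := fun i =>
    ⟨by linarith [(hν i).2], by linarith [(hν i).1]⟩
  have hmle : ∀ i, m ≤ (α i).1 := fun i => by
    rw [hm_def]; exact Finset.inf'_le (fun i => (α i).1) (Finset.mem_univ i)
  have hMge : ∀ i, (α i).1 ≤ M := fun i => by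
    rw [hM_def]; exact Finset.le_sup' (fun i => (α i).1) (Finset.mem_univ i)
  have hele : ∀ i, e ≤ (α i).2.1 := fun i => by
    rw [he_def]; exact Finset.inf'_le (fun i => (α i).2.1) (Finset.mem_univ i)
  have hvle : ∀ i, v ≤ (α i).2.2 := fun i => by
    rw [hv_def]; exact Finset.inf'_le (fun i => (α i).2.2) (Finset.mem_univ i)
  have hVge : ∀ i, (α i).2.2 ≤ V := fun i => by
    rw [hV_def]; exact Finset.le_sup' (fun i => (α i).2.2) (Finset.mem_univ i)
  have hm01 : m ∈ Icc (0:ℝ) 1 := by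
    obtain ⟨i, -, hi⟩ := Finset.exists_mem_eq_inf' hne (fun i => (α i).1)
    rw [hm_def, hi]; exact hμ i
  have hM01 : M ∈ Icc (0:ℝ) 1 := by
    obtain ⟨i, -, hi⟩ := Finset.exists_mem_eq_sup' hne (fun i => (α i).1)
    rw [hM_def, hi]; exact hμ i
  have he01 : e ∈ Icc (0:ℝ) 1 := by
    obtain ⟨i, -, hi⟩ := Finset.exists_mem_eq_inf' hne (fun i => (α i).2.1)
    rw [he_def, hi]; exact hη i
  have hv01 : v ∈ Icc (0:ℝ) 1 := by
    obtain ⟨i, -, hi⟩ := Finset.exists_mem_eq_inf' hne (fun i => (α i).2.2)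
    rw [hv_def, hi]; exact hν i
  have hV01 : V ∈ Icc (0:ℝ) 1 := by
    obtain ⟨i, -, hi⟩ := Finset.exists_mem_eq_sup' hne (fun i => (α i).2.2)
    rw [hV_def, hi]; exact hν i
  have hsum1 : m + e + V ≤ 1 := by
    obtain ⟨i, -, hi⟩ := Finset.exists_mem_eq_sup' hne (fun i => (α i).2.2)
    have h2 := (hα i).2.2.2
    rw [hV_def, hi]
    linarith [hmle i, hele i]
  obtain ⟨h, t, hterms⟩ : ∃ h t, terms' τ σ p q n α = h :: t := by
    have hlen := terms'_length τ σ p q n α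
    cases hEq : terms' τ σ p q n α with
    | nil => rw [hEq] at hlen; simp at hlen; omega
    | cons a l => exact ⟨a, l, rfl⟩
  have hLlen : (h :: t).length = n * (n - 1) := by
    rw [← hterms]; exact terms'_length τ σ p q n α
  have hmem : ∀ x ∈ h :: t, ∃ i j : Fin n, j ≠ i ∧
      x = (σ (ENNReal.ofReal p * τ (α i).1 + ENNReal.ofReal q * τ (α j).1),
           σ (ENNReal.ofReal p * τ ((α i).2.1 + (α i).1) +
              ENNReal.ofReal q * τ ((α j).2.1 + (α j).1)) -
             σ (ENNReal.ofReal p * τ (α i).1 + ENNReal.ofReal q * τ (α j).1),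
           1 - σ (ENNReal.ofReal p * τ (1 - (α i).2.2) +
              ENNReal.ofReal q * τ (1 - (α j).2.2))) := by
    intro x hx
    obtain ⟨i, j, hij, hx'⟩ := mem_terms' (hterms ▸ hx)
    exact ⟨i, j, hij, by rw [hx', term_eq hg]⟩
  have hbasic : ∀ x ∈ h :: t,
      x.1 ∈ Icc (0:ℝ) 1 ∧ x.2.2 ∈ Icc (0:ℝ) 1 ∧
      x.2.1 + x.2.2 ∈ Icc (0:ℝ) 1 ∧
      τ (1 - x.1) ≤ τ (x.2.1 + x.2.2) ∧ τ (x.2.1 + x.2.2) ≤ τ x.2.2 := by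
    intro x hx
    obtain ⟨i, j, hij, hx'⟩ := hmem x hx
    subst hx'
    dsimp only
    have h1 : σ (ENNReal.ofReal p * τ (α i).1 + ENNReal.ofReal q * τ (α j).1) ≤
        σ (ENNReal.ofReal p * τ ((α i).2.1 + (α i).1) +
           ENNReal.ofReal q * τ ((α j).2.1 + (α j).1)) :=
      sigma_anti hg (add_le_add
        (mul_le_mul_right (tau_le_tau hg (hμ i) (hw i) (by linarith [(hη i).1])) _)
        (mul_le_mul_right (tau_le_tau hg (hμ j) (hw j) (by linarith [(hη j).1])) _))
    have h2 : σ (ENNReal.ofReal p * τ ((α i).2.1 + (α i).1) +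
           ENNReal.ofReal q * τ ((α j).2.1 + (α j).1)) ≤
        σ (ENNReal.ofReal p * τ (1 - (α i).2.2) + ENNReal.ofReal q * τ (1 - (α j).2.2)) :=
      sigma_anti hg (add_le_add
        (mul_le_mul_right (tau_le_tau hg (hw i) (h1ν i) (hwv i)) _)
        (mul_le_mul_right (tau_le_tau hg (hw j) (h1ν j) (hwv j)) _))
    have hTA := hg.mem (ENNReal.ofReal p * τ (α i).1 + ENNReal.ofReal q * τ (α j).1)
    have hTN := hg.mem (ENNReal.ofReal p * τ (1 - (α i).2.2) +
      ENNReal.ofReal q * τ (1 - (α j).2.2))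
    have hu : σ (ENNReal.ofReal p * τ ((α i).2.1 + (α i).1) +
           ENNReal.ofReal q * τ ((α j).2.1 + (α j).1)) -
          σ (ENNReal.ofReal p * τ (α i).1 + ENNReal.ofReal q * τ (α j).1) +
          (1 - σ (ENNReal.ofReal p * τ (1 - (α i).2.2) +
            ENNReal.ofReal q * τ (1 - (α j).2.2))) ∈ Icc (0:ℝ) 1 :=
      ⟨by linarith [hTN.2], by linarith [hTA.1]⟩
    refine ⟨hg.mem _, one_sub_mem hg _, hu, ?_, ?_⟩
    · exact tau_le_tau hg hu ⟨by linarith [hTA.2], by linarith [hTA.1]⟩ (by linarith)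
    · exact tau_le_tau hg (one_sub_mem hg _) hu (by linarith)
  have hb1 := (hbasic h (List.mem_cons_self)).1
  have hb2 := (hbasic h (List.mem_cons_self)).2.1
  have hb3 := (hbasic h (List.mem_cons_self)).2.2.1
  have hPF : PFIBM τ σ p q n α =
      (σ (ENNReal.ofReal (1/(p+q)) * τ (1 - σ (ENNReal.ofReal (1/((n:ℝ)*((n:ℝ)-1))) *
          ((h :: t).map fun x => τ (1 - x.1)).sum))),
       σ (ENNReal.ofReal (1/(p+q)) * τ
          (σ (ENNReal.ofReal (1/((n:ℝ)*((n:ℝ)-1))) * ((h :: t).map fun x => τ (x.2.1 + x.2.2)).sum) -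
           σ (ENNReal.ofReal (1/((n:ℝ)*((n:ℝ)-1))) * ((h :: t).map fun x => τ x.2.2).sum) +
           (1 - σ (ENNReal.ofReal (1/((n:ℝ)*((n:ℝ)-1))) * ((h :: t).map fun x => τ (1 - x.1)).sum)))) -
         σ (ENNReal.ofReal (1/(p+q)) * τ (1 - σ (ENNReal.ofReal (1/((n:ℝ)*((n:ℝ)-1))) *
          ((h :: t).map fun x => τ (1 - x.1)).sum))),
       1 - σ (ENNReal.ofReal (1/(p+q)) * τ (1 - σ (ENNReal.ofReal (1/((n:ℝ)*((n:ℝ)-1))) *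
          ((h :: t).map fun x => τ x.2.2).sum)))) := by
    rw [PFIBM_cons τ σ p q n α hterms, foldl_oplus_eq hg t h hb1 hb2 hb3]
    simp only [ppowG, smulG, zeta, zetaInv, List.map_cons, List.sum_cons]
    refine Prod.ext ?_ (Prod.ext ?_ ?_) <;> dsimp only
    · rw [show (1:ℝ) - (1 - σ (τ (1 - h.1) + ((t.map fun x => τ (1 - x.1))).sum)) =
        σ (τ (1 - h.1) + ((t.map fun x => τ (1 - x.1))).sum) by ring, hg.right_inv]
    · rw [show (1:ℝ) - (1 - σ (τ (1 - h.1) + ((t.map fun x => τ (1 - x.1))).sum)) =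
        σ (τ (1 - h.1) + ((t.map fun x => τ (1 - x.1))).sum) by ring,
        show σ (τ (h.2.1 + h.2.2) + (t.map fun x => τ (x.2.1 + x.2.2)).sum) -
            σ (τ h.2.2 + (t.map fun x => τ x.2.2).sum) +
            σ (τ h.2.2 + (t.map fun x => τ x.2.2).sum) =
          σ (τ (h.2.1 + h.2.2) + (t.map fun x => τ (x.2.1 + x.2.2)).sum) by ring,
        hg.right_inv, hg.right_inv, hg.right_inv]
    · rw [hg.right_inv]
  set P := ENNReal.ofReal p with hP_def
  set Q := ENNReal.ofReal q with hQ_def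
  set r := ENNReal.ofReal (1/(p+q)) with hr_def
  set lam := ENNReal.ofReal (1/((n:ℝ)*((n:ℝ)-1))) with hlam_def
  set SA := ((h :: t).map fun x => τ (1 - x.1)).sum with hSA_def
  set SB := ((h :: t).map fun x => τ (x.2.1 + x.2.2)).sum with hSB_def
  set SC := ((h :: t).map fun x => τ x.2.2).sum with hSC_def
  have hpq : (0:ℝ) < p + q := by linarith
  have hrc : r * (P + Q) = 1 := by
    rw [hr_def, hP_def, hQ_def, ← ENNReal.ofReal_add hp.le hq.le,
      ← ENNReal.ofReal_mul (by positivity), one_div, inv_mul_cancel₀ hpq.ne',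
      ENNReal.ofReal_one]
  have hnn : (0:ℝ) < (n:ℝ) * ((n:ℝ) - 1) := by
    have h2 : (2:ℝ) ≤ (n:ℝ) := by exact_mod_cast hn
    nlinarith
  have hNcast : ((n * (n-1) : ℕ) : ℝ≥0∞) = ENNReal.ofReal ((n:ℝ) * ((n:ℝ)-1)) := by
    rw [← ENNReal.ofReal_natCast]
    congr 1
    have h1n : 1 ≤ n := by omega
    push_cast [Nat.cast_sub h1n]
    ring
  have hlN : lam * ((n * (n-1) : ℕ) : ℝ≥0∞) = 1 := by
    rw [hlam_def, hNcast, ← ENNReal.ofReal_mul (by positivity), one_div,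
      inv_mul_cancel₀ hnn.ne', ENNReal.ofReal_one]
  have hbμl : ∀ y ∈ (h :: t).map (fun x => τ (1 - x.1)),
      τ (1 - σ ((P + Q) * τ m)) ≤ y := by
    simp only [List.mem_map]
    rintro y ⟨x, hx, rfl⟩
    obtain ⟨i, j, hij, hx'⟩ := hmem x hx
    rw [hx']
    exact zeta_le hg P Q (hμ i) (hμ j) hm01 (hmle i) (hmle j)
  have hbμu : ∀ y ∈ (h :: t).map (fun x => τ (1 - x.1)),
      y ≤ τ (1 - σ ((P + Q) * τ M)) := by
    simp only [List.mem_map]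
    rintro y ⟨x, hx, rfl⟩
    obtain ⟨i, j, hij, hx'⟩ := hmem x hx
    rw [hx']
    exact zeta_ge hg P Q (hμ i) (hμ j) hM01 (hMge i) (hMge j)
  have hbνl : ∀ y ∈ (h :: t).map (fun x => τ x.2.2),
      τ (1 - σ ((P + Q) * τ (1 - V))) ≤ y := by
    simp only [List.mem_map]
    rintro y ⟨x, hx, rfl⟩
    obtain ⟨i, j, hij, hx'⟩ := hmem x hx
    rw [hx']
    exact zeta_le hg P Q (h1ν i) (h1ν j) ⟨by linarith [hV01.2], by linarith [hV01.1]⟩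
      (by linarith [hVge i]) (by linarith [hVge j])
  have hbνu : ∀ y ∈ (h :: t).map (fun x => τ x.2.2),
      y ≤ τ (1 - σ ((P + Q) * τ (1 - v))) := by
    simp only [List.mem_map]
    rintro y ⟨x, hx, rfl⟩
    obtain ⟨i, j, hij, hx'⟩ := hmem x hx
    rw [hx']
    exact zeta_ge hg P Q (h1ν i) (h1ν j) ⟨by linarith [hv01.2], by linarith [hv01.1]⟩
      (by linarith [hvle i]) (by linarith [hvle j])
  have hSAl : ((n * (n-1) : ℕ) : ℝ≥0∞) * τ (1 - σ ((P + Q) * τ m)) ≤ SA := by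
    have h1 := List.card_nsmul_le_sum ((h :: t).map fun x => τ (1 - x.1)) _ hbμl
    rwa [List.length_map, hLlen, nsmul_eq_mul, ← hSA_def] at h1
  have hSAu : SA ≤ ((n * (n-1) : ℕ) : ℝ≥0∞) * τ (1 - σ ((P + Q) * τ M)) := by
    have h1 := List.sum_le_card_nsmul ((h :: t).map fun x => τ (1 - x.1)) _ hbμu
    rwa [List.length_map, hLlen, nsmul_eq_mul, ← hSA_def] at h1
  have hSCl : ((n * (n-1) : ℕ) : ℝ≥0∞) * τ (1 - σ ((P + Q) * τ (1 - V))) ≤ SC := by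
    have h1 := List.card_nsmul_le_sum ((h :: t).map fun x => τ x.2.2) _ hbνl
    rwa [List.length_map, hLlen, nsmul_eq_mul, ← hSC_def] at h1
  have hSCu : SC ≤ ((n * (n-1) : ℕ) : ℝ≥0∞) * τ (1 - σ ((P + Q) * τ (1 - v))) := by
    have h1 := List.sum_le_card_nsmul ((h :: t).map fun x => τ x.2.2) _ hbνu
    rwa [List.length_map, hLlen, nsmul_eq_mul, ← hSC_def] at h1
  have hμlb : m ≤ σ (r * τ (1 - σ (lam * SA))) :=
    (F_val hg hrc hlN hm01).symm.trans_le (F_mono hg r lam hSAl)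
  have hμub : σ (r * τ (1 - σ (lam * SA))) ≤ M :=
    (F_mono hg r lam hSAu).trans_eq (F_val hg hrc hlN hM01)
  have hνaux_l : 1 - V ≤ σ (r * τ (1 - σ (lam * SC))) :=
    (F_val hg hrc hlN ⟨by linarith [hV01.2], by linarith [hV01.1]⟩).symm.trans_le
      (F_mono hg r lam hSCl)
  have hνaux_u : σ (r * τ (1 - σ (lam * SC))) ≤ 1 - v :=
    (F_mono hg r lam hSCu).trans_eq
      (F_val hg hrc hlN ⟨by linarith [hv01.2], by linarith [hv01.1]⟩)
  have hAB : SA ≤ SB := by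
    rw [hSA_def, hSB_def]
    exact List.sum_le_sum fun x hx => (hbasic x hx).2.2.2.1
  have hBC : SB ≤ SC := by
    rw [hSB_def, hSC_def]
    exact List.sum_le_sum fun x hx => (hbasic x hx).2.2.2.2
  have hba : σ (lam * SB) ≤ σ (lam * SA) := sigma_anti hg (mul_le_mul_right hAB lam)
  have hcb : σ (lam * SC) ≤ σ (lam * SB) := sigma_anti hg (mul_le_mul_right hBC lam)
  have hargw01 : σ (lam * SB) - σ (lam * SC) + (1 - σ (lam * SA)) ∈ Icc (0:ℝ) 1 :=
    ⟨by linarith [(hg.mem (lam * SA)).2], by linarith [(hg.mem (lam * SC)).1]⟩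
  have hwub : σ (r * τ (σ (lam * SB) - σ (lam * SC) + (1 - σ (lam * SA)))) ≤
      σ (r * τ (1 - σ (lam * SC))) :=
    sigma_anti hg (mul_le_mul_right
      (tau_le_tau hg hargw01 (one_sub_mem hg _) (by linarith)) r)
  have hwlb : σ (r * τ (1 - σ (lam * SA))) ≤
      σ (r * τ (σ (lam * SB) - σ (lam * SC) + (1 - σ (lam * SA)))) :=
    sigma_anti hg (mul_le_mul_right
      (tau_le_tau hg (one_sub_mem hg _) hargw01 (by linarith)) r)
  have hkey : σ (r * τ (1 - σ (lam * SA))) = m →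
      1 - σ (r * τ (1 - σ (lam * SC))) = V →
      m + e ≤ σ (r * τ (σ (lam * SB) - σ (lam * SC) + (1 - σ (lam * SA)))) := by
    intro hB1 hB3
    have hr0 : r ≠ 0 := by
      rw [hr_def, Ne, ENNReal.ofReal_eq_zero, not_le]; positivity
    have hrT : r ≠ ∞ := by rw [hr_def]; exact ENNReal.ofReal_ne_top
    have hlam0 : lam ≠ 0 := by
      rw [hlam_def, Ne, ENNReal.ofReal_eq_zero, not_le]; positivity
    have hlamT : lam ≠ ∞ := by rw [hlam_def]; exact ENNReal.ofReal_ne_top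
    have hX1V : 1 - V ∈ Icc (0:ℝ) 1 := ⟨by linarith [hV01.2], by linarith [hV01.1]⟩
    have hall1 : ∀ x ∈ h :: t, x.1 = σ ((P + Q) * τ m) := by
      rcases eq_or_lt_of_le hm01.2 with hm1 | hmlt
      · intro x hx
        obtain ⟨i, j, hij, hx'⟩ := hmem x hx
        rw [hx']
        dsimp only
        have hμi : (α i).1 = 1 := by
          have h1 := hmle i; rw [hm1] at h1; linarith [(hμ i).2]
        have hμj : (α j).1 = 1 := by
          have h1 := hmle j; rw [hm1] at h1; linarith [(hμ j).2]
        rw [hμi, hμj, hm1, hg.map_one, mul_zero, mul_zero, add_zero, mul_zero]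
      · have hmain := hB1.trans (F_val hg hrc hlN hm01).symm
        have h2 := sigma_inj hg hmain
        have h3 := (ENNReal.mul_right_inj hr0 hrT).mp h2
        have h4 := tau_inj hg (one_sub_mem hg _) (one_sub_mem hg _) h3
        have h5 : σ (lam * SA) = σ (lam * (((n * (n-1) : ℕ) : ℝ≥0∞) *
            τ (1 - σ ((P + Q) * τ m)))) := by linarith
        have h6 := sigma_inj hg h5
        have h7 := (ENNReal.mul_right_inj hlam0 hlamT).mp h6
        have h8 : ∀ y ∈ (h :: t).map (fun x => τ (1 - x.1)),
            y = τ (1 - σ ((P + Q) * τ m)) := by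
          apply all_eq_of_sum_le hbμl
          rw [List.length_map, hLlen, nsmul_eq_mul, ← hSA_def]
          exact le_of_eq h7
        intro x hx
        have h9 := h8 _ (List.mem_map_of_mem hx)
        have hx1m := (hbasic x hx).1
        have h10 := tau_inj hg ⟨by linarith [hx1m.2], by linarith [hx1m.1]⟩
          (one_sub_mem hg _) h9
        linarith
    have hall3 : ∀ x ∈ h :: t, x.2.2 = 1 - σ ((P + Q) * τ (1 - V)) := by
      rcases eq_or_lt_of_le hV01.1 with hV0 | hVpos
      · intro x hx
        obtain ⟨i, j, hij, hx'⟩ := hmem x hx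
        rw [hx']
        dsimp only
        have hνi : (α i).2.2 = 0 := by
          have h1 := hVge i; rw [← hV0] at h1; linarith [(hν i).1]
        have hνj : (α j).2.2 = 0 := by
          have h1 := hVge j; rw [← hV0] at h1; linarith [(hν j).1]
        rw [hνi, hνj, ← hV0, sub_zero, hg.map_one, mul_zero, mul_zero, add_zero,
          mul_zero]
      · have hmain : σ (r * τ (1 - σ (lam * SC))) =
            σ (r * τ (1 - σ (lam * (((n * (n-1) : ℕ) : ℝ≥0∞) *
              τ (1 - σ ((P + Q) * τ (1 - V))))))) := by
          rw [F_val hg hrc hlN hX1V]; linarith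
        have h2 := sigma_inj hg hmain
        have h3 := (ENNReal.mul_right_inj hr0 hrT).mp h2
        have h4 := tau_inj hg (one_sub_mem hg _) (one_sub_mem hg _) h3
        have h5 : σ (lam * SC) = σ (lam * (((n * (n-1) : ℕ) : ℝ≥0∞) *
            τ (1 - σ ((P + Q) * τ (1 - V))))) := by linarith
        have h6 := sigma_inj hg h5
        have h7 := (ENNReal.mul_right_inj hlam0 hlamT).mp h6
        have h8 : ∀ y ∈ (h :: t).map (fun x => τ x.2.2),
            y = τ (1 - σ ((P + Q) * τ (1 - V))) := by
          apply all_eq_of_sum_le hbνl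
          rw [List.length_map, hLlen, nsmul_eq_mul, ← hSC_def]
          exact le_of_eq h7
        intro x hx
        have h9 := h8 _ (List.mem_map_of_mem hx)
        have hx3m := (hbasic x hx).2.1
        exact tau_inj hg hx3m (one_sub_mem hg _) h9
    have hs01 : m + e ∈ Icc (0:ℝ) 1 :=
      ⟨add_nonneg hm01.1 he01.1, by linarith [hV01.1]⟩
    have hs1V : m + e ≤ 1 - V := by linarith
    have hm's' : σ ((P + Q) * τ m) ≤ σ ((P + Q) * τ (m + e)) :=
      sigma_anti hg (mul_le_mul_right
        (tau_le_tau hg hm01 hs01 (by linarith [he01.1])) _)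
    have hs'V : σ ((P + Q) * τ (m + e)) ≤ σ ((P + Q) * τ (1 - V)) :=
      sigma_anti hg (mul_le_mul_right (tau_le_tau hg hs01 hX1V hs1V) _)
    have hu01 : σ ((P + Q) * τ (m + e)) - σ ((P + Q) * τ m) +
        (1 - σ ((P + Q) * τ (1 - V))) ∈ Icc (0:ℝ) 1 :=
      ⟨by linarith [(hg.mem ((P + Q) * τ (1 - V))).2],
       by linarith [(hg.mem ((P + Q) * τ m)).1]⟩
    have hSBub : SB ≤ ((n * (n-1) : ℕ) : ℝ≥0∞) *
        τ (σ ((P + Q) * τ (m + e)) - σ ((P + Q) * τ m) +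
          (1 - σ ((P + Q) * τ (1 - V)))) := by
      have hb : ∀ y ∈ (h :: t).map (fun x => τ (x.2.1 + x.2.2)),
          y ≤ τ (σ ((P + Q) * τ (m + e)) - σ ((P + Q) * τ m) +
            (1 - σ ((P + Q) * τ (1 - V)))) := by
        simp only [List.mem_map]
        rintro y ⟨x, hx, rfl⟩
        have hx1 := hall1 x hx
        have hx3 := hall3 x hx
        have huIcc := (hbasic x hx).2.2.1
        obtain ⟨i, j, hij, hx'⟩ := hmem x hx
        rw [hx'] at hx1 hx3 huIcc ⊢
        dsimp only at hx1 hx3 huIcc ⊢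
        have hTw : σ ((P + Q) * τ (m + e)) ≤
            σ (P * τ ((α i).2.1 + (α i).1) + Q * τ ((α j).2.1 + (α j).1)) :=
          sigma_anti hg (by
            rw [add_mul]
            exact add_le_add
              (mul_le_mul_right (tau_le_tau hg hs01 (hw i)
                (by linarith [hmle i, hele i])) P)
              (mul_le_mul_right (tau_le_tau hg hs01 (hw j)
                (by linarith [hmle j, hele j])) Q))
        rw [hx1, hx3] at huIcc ⊢
        exact tau_le_tau hg hu01 huIcc (by linarith)
      have h1 := List.sum_le_card_nsmul ((h :: t).map fun x => τ (x.2.1 + x.2.2)) _ hb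
      rwa [List.length_map, hLlen, nsmul_eq_mul, ← hSB_def] at h1
    have hSAval : SA = ((n * (n-1) : ℕ) : ℝ≥0∞) * τ (1 - σ ((P + Q) * τ m)) := by
      refine le_antisymm ?_ hSAl
      have hb : ∀ y ∈ (h :: t).map (fun x => τ (1 - x.1)),
          y ≤ τ (1 - σ ((P + Q) * τ m)) := by
        simp only [List.mem_map]
        rintro y ⟨x, hx, rfl⟩
        rw [hall1 x hx]
      have h1 := List.sum_le_card_nsmul ((h :: t).map fun x => τ (1 - x.1)) _ hb
      rwa [List.length_map, hLlen, nsmul_eq_mul, ← hSA_def] at h1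
    have hSCval : SC = ((n * (n-1) : ℕ) : ℝ≥0∞) *
        τ (1 - σ ((P + Q) * τ (1 - V))) := by
      refine le_antisymm ?_ hSCl
      have hb : ∀ y ∈ (h :: t).map (fun x => τ x.2.2),
          y ≤ τ (1 - σ ((P + Q) * τ (1 - V))) := by
        simp only [List.mem_map]
        rintro y ⟨x, hx, rfl⟩
        rw [hall3 x hx]
      have h1 := List.sum_le_card_nsmul ((h :: t).map fun x => τ x.2.2) _ hb
      rwa [List.length_map, hLlen, nsmul_eq_mul, ← hSC_def] at h1
    have haσ : σ (lam * SA) = 1 - σ ((P + Q) * τ m) := by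
      rw [hSAval, ← mul_assoc, hlN, one_mul, hg.left_inv _ (one_sub_mem hg _)]
    have hcσ : σ (lam * SC) = 1 - σ ((P + Q) * τ (1 - V)) := by
      rw [hSCval, ← mul_assoc, hlN, one_mul, hg.left_inv _ (one_sub_mem hg _)]
    have hbσ : σ ((P + Q) * τ (m + e)) - σ ((P + Q) * τ m) +
        (1 - σ ((P + Q) * τ (1 - V))) ≤ σ (lam * SB) := by
      have h1 : σ (lam * (((n * (n-1) : ℕ) : ℝ≥0∞) *
          τ (σ ((P + Q) * τ (m + e)) - σ ((P + Q) * τ m) +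
            (1 - σ ((P + Q) * τ (1 - V)))))) ≤ σ (lam * SB) :=
        sigma_anti hg (mul_le_mul_right hSBub lam)
      rwa [← mul_assoc, hlN, one_mul, hg.left_inv _ hu01] at h1
    have hargs' : σ ((P + Q) * τ (m + e)) ≤
        σ (lam * SB) - σ (lam * SC) + (1 - σ (lam * SA)) := by
      linarith
    calc m + e = σ (r * ((P + Q) * τ (m + e))) := by
          rw [← mul_assoc, hrc, one_mul, hg.left_inv _ hs01]
      _ = σ (r * τ (σ ((P + Q) * τ (m + e)))) := by rw [hg.right_inv]
      _ ≤ σ (r * τ (σ (lam * SB) - σ (lam * SC) + (1 - σ (lam * SA)))) :=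
          sigma_anti hg (mul_le_mul_right
            (tau_le_tau hg (hg.mem _) hargw01 hargs') r)
  rw [hPF]
  constructor
  · have hsc : m - V ≤ σ (r * τ (1 - σ (lam * SA))) -
        (1 - σ (r * τ (1 - σ (lam * SC)))) := by linarith
    rcases eq_or_lt_of_le hsc with heq | hlt
    · have hB1 : σ (r * τ (1 - σ (lam * SA))) = m := by linarith
      have hB3 : 1 - σ (r * τ (1 - σ (lam * SC))) = V := by linarith
      have hwkey := hkey hB1 hB3
      rcases eq_or_lt_of_le (show m + e + V ≤
          σ (r * τ (σ (lam * SB) - σ (lam * SC) + (1 - σ (lam * SA)))) + V by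
            linarith) with h2eq | h2lt
      · right
        refine Prod.ext ?_ (Prod.ext ?_ ?_) <;> dsimp only <;> linarith
      · left; right
        refine ⟨?_, Or.inr ⟨?_, ?_⟩⟩ <;>
          simp only [scoreW, acc1W, acc2W] <;> linarith
    · left; left
      simp only [scoreW]; linarith
  · have hB3v : v ≤ 1 - σ (r * τ (1 - σ (lam * SC))) := by linarith
    have hsc : σ (r * τ (1 - σ (lam * SA))) -
        (1 - σ (r * τ (1 - σ (lam * SC)))) ≤ M - v := by linarith
    rcases eq_or_lt_of_le hsc with heq | hlt
    · have hB1 : σ (r * τ (1 - σ (lam * SA))) = M := by linarith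
      have hB3 : 1 - σ (r * τ (1 - σ (lam * SC))) = v := by linarith
      rcases eq_or_lt_of_le (show
          σ (r * τ (σ (lam * SB) - σ (lam * SC) + (1 - σ (lam * SA)))) +
            (1 - σ (r * τ (1 - σ (lam * SC)))) ≤ 1 by linarith) with h2eq | h2lt
      · right
        refine Prod.ext ?_ (Prod.ext ?_ ?_) <;> dsimp only <;> linarith
      · left; right
        refine ⟨?_, Or.inr ⟨?_, ?_⟩⟩ <;>
          simp only [scoreW, acc1W, acc2W] <;> linarith
    · left; left
      simp only [scoreW]; linarith
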